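/- arXiv:1809.01384 — 2 statements merged into one kernel-verified Lean document; each statement's English description precedes it below -/
import Mathlib

section
/- For every integer k ≥ 2, every n ≥ 1, and all natural numbers d ≤ n−1 and j, the number of permutations σ ∈ S_n(132) with des(σ) = d and (12⋯k)-mch(σ) = j equals the number of permutations σ ∈ S_n(132) with des(σ) = n−1−d and (k(k−1)⋯21)-mch(σ) = j, where 12⋯k denotes the identity permutation of length k and k(k−1)⋯21 denotes the decreasing permutation of length k. -/
open Finset

/-- The value of a permutation of `Fin n` at a (0-indexed) natural number index,
with junk value `0` outside the range. -/
def permVal {n : ℕ} (σ : Equiv.Perm (Fin n)) (j : ℕ) : ℕ :=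
  if h : j < n then (σ ⟨j, h⟩ : ℕ) else 0

/-- The number of descents of `σ`: 0-indexed positions `i < n-1` with `σ i > σ (i+1)`. -/
def desc {n : ℕ} (σ : Equiv.Perm (Fin n)) : ℕ :=
  ((Finset.range (n - 1)).filter (fun i => permVal σ (i + 1) < permVal σ i)).card

/-- The number of consecutive `γ`-matches in `σ`. -/
def cmch {m n : ℕ} (γ : Equiv.Perm (Fin m)) (σ : Equiv.Perm (Fin n)) : ℕ :=
  ((Finset.range (n + 1 - m)).filter (fun i =>
    ∀ a b : Fin m, (permVal σ (i + (a : ℕ)) < permVal σ (i + (b : ℕ)) ↔ γ a < γ b))).card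

/-- `σ` classically avoids the pattern `lam`. -/
def avoids {l n : ℕ} (lam : Equiv.Perm (Fin l)) (σ : Equiv.Perm (Fin n)) : Prop :=
  ¬ ∃ f : Fin l → Fin n, StrictMono f ∧
      ∀ a b : Fin l, (σ (f a) < σ (f b) ↔ lam a < lam b)

/-!
A 132-avoiding permutation of `{0, …, n-1}` has the form `α (n-1) β`, where every entry of `α`
exceeds every entry of `β` and `α`, `β` are again 132-avoiding. Recursively, `S_n(132)` is in
bijection with binary trees on `n` nodes (root = maximum, left subtree = larger values). The
descent word of the permutation depends only on the tree: the word of the left subtree, an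
ascent into the root, a descent out of it, the word of the right subtree. Hence mirroring the
tree reverses and complements the descent word. Both statistics are read off the descent word:
`des` counts its descents, and a consecutive `12⋯k` (resp. `k⋯21`) match is a run of `k - 1`
ascents (resp. descents). So mirroring sends `des` to `n - 1 - des` and swaps the two match counts.
-/

def revCompl (w : List Bool) : List Bool := (w.map not).reverse

@[simp] lemma length_revCompl (w : List Bool) : (revCompl w).length = w.length := by
  simp [revCompl]

lemma revCompl_revCompl (w : List Bool) : revCompl (revCompl w) = w := by
  simp [revCompl, List.map_reverse, Function.comp_def]

@[simp] lemma revCompl_append (u v : List Bool) :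
    revCompl (u ++ v) = revCompl v ++ revCompl u := by
  simp [revCompl]

lemma count_true_revCompl (w : List Bool) :
    (revCompl w).count true = w.length - w.count true := by
  have hnot : (w.map not).count true = w.count false :=
    List.count_map_of_injective w not Bool.not_injective false
  have := List.count_true_add_count_false w
  rw [revCompl, List.count_reverse, hnot]
  omega

lemma getD_revCompl {w : List Bool} {i : ℕ} (h : i < w.length) :
    (revCompl w).getD i false = !w.getD (w.length - 1 - i) false := by
  rw [revCompl, List.getD_reverse _ (by simpa using h), List.length_map,
    List.getD_eq_getElem _ _ (by simp; omega), List.getD_eq_getElem _ _ (by omega)]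
  simp

-- Windows of `k - 1` consecutive letters equal to `b`; in a descent word of length `n - 1` they
-- are the windows of `k` consecutive entries of the permutation.
def runCount (b : Bool) (k : ℕ) (w : List Bool) : ℕ :=
  #{i ∈ range (w.length + 2 - k) | ∀ t < k - 1, w.getD (i + t) false = b}

lemma runCount_revCompl (b : Bool) (k : ℕ) (w : List Bool) :
    runCount b k (revCompl w) = runCount (!b) k w := by
  unfold runCount
  rw [length_revCompl, card_filter, card_filter, ← sum_range_reflect]
  refine sum_congr rfl fun i hi => if_congr ?_ rfl rfl
  rw [mem_range] at hi
  constructor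
  · intro h t ht
    have := h (k - 2 - t) (by omega)
    rw [getD_revCompl (by omega)] at this
    rw [← this, Bool.not_not]
    congr 1
    omega
  · intro h t ht
    rw [getD_revCompl (by omega), ← Bool.not_not b, ← h (k - 2 - t) (by omega)]
    congr 2
    omega

lemma count_true_eq_card_filter : ∀ w : List Bool,
    w.count true = #{i ∈ range w.length | w.getD i false = true}
  | [] => rfl
  | b :: w => by
    rw [card_filter, List.length_cons, sum_range_succ', ← card_filter]
    simp only [List.getD_cons_succ, List.getD_cons_zero, ← count_true_eq_card_filter w,
      List.count_cons]
    cases b <;> simp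

def descentWord : List ℕ → List Bool
  | a :: b :: t => decide (b < a) :: descentWord (b :: t)
  | _ => []

lemma length_descentWord : ∀ l : List ℕ, (descentWord l).length = l.length - 1
  | [] | [_] => rfl
  | a :: b :: t => by simp [descentWord, length_descentWord (b :: t)]

lemma getD_descentWord : ∀ {l : List ℕ} {i : ℕ}, i + 1 < l.length →
    (descentWord l).getD i false = decide (l.getD (i + 1) 0 < l.getD i 0)
  | a :: b :: t, 0, _ => rfl
  | a :: b :: t, i + 1, h => getD_descentWord (l := b :: t) (by simpa using h)

lemma descentWord_append_cons (x : ℕ) (b : List ℕ) :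
    ∀ a : List ℕ, descentWord (a ++ x :: b) = descentWord (a ++ [x]) ++ descentWord (x :: b)
  | [] => rfl
  | [y] => rfl
  | y :: z :: a => by
    have ih := descentWord_append_cons x b (z :: a)
    simp only [List.cons_append] at ih ⊢
    rw [descentWord, ih, descentWord, List.cons_append]

lemma descentWord_append_singleton (x : ℕ) :
    ∀ (a : List ℕ) (ha : a ≠ []),
      descentWord (a ++ [x]) = descentWord a ++ [decide (x < a.getLast ha)]
  | [y], _ => rfl
  | y :: z :: a, _ => by
    have ih := descentWord_append_singleton x (z :: a) (by simp)
    simp only [List.cons_append] at ih ⊢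
    rw [descentWord, ih, descentWord, List.cons_append, List.getLast_cons_cons]

lemma descentWord_cons_of_lt {m : ℕ} {B : List ℕ} (hB : ∀ y ∈ B, y < m) :
    descentWord (m :: B) = (if B = [] then [] else [true]) ++ descentWord B := by
  rcases B with _ | ⟨c, B⟩
  · rfl
  · simp [descentWord, hB c (by simp)]

lemma descentWord_append_singleton_of_lt {m : ℕ} {A : List ℕ} (hA : ∀ x ∈ A, x < m) :
    descentWord (A ++ [m]) = descentWord A ++ (if A = [] then [] else [false]) := by
  by_cases h : A = []
  · subst h; rfl
  · simp [descentWord_append_singleton m A h, h, (hA _ (List.getLast_mem h)).le]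

def Avoids132 (l : List ℕ) : Prop := ∀ a b c, [a, b, c].Sublist l → ¬(a < c ∧ c < b)

lemma Avoids132.sublist {l l' : List ℕ} (h : Avoids132 l) (hl : l'.Sublist l) : Avoids132 l' :=
  fun a b c habc => h a b c (habc.trans hl)

lemma avoids132_append_cons {A B : List ℕ} {m : ℕ} (hA : Avoids132 A) (hB : Avoids132 B)
    (hAm : ∀ x ∈ A, x < m) (hBm : ∀ y ∈ B, y < m) (hAB : ∀ x ∈ A, ∀ y ∈ B, y < x) :
    Avoids132 (A ++ m :: B) := by
  unfold Avoids132
  intro a b c h ⟨hac, hcb⟩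
  obtain ⟨l₁, l₂, e, h₁, h₂⟩ := List.sublist_append_iff.1 h
  rcases l₁ with _ | ⟨x, _ | ⟨y, _ | ⟨z, _ | ⟨w, l₁⟩⟩⟩⟩ <;>
    simp only [List.nil_append, List.cons_append, List.cons.injEq] at e
  · rcases List.sublist_cons_iff.1 (e ▸ h₂) with h₂ | ⟨r, hr, h₂⟩
    · exact hB a b c h₂ ⟨hac, hcb⟩
    · simp only [List.cons.injEq] at hr
      obtain ⟨rfl, rfl⟩ := hr
      have := hBm c (h₂.subset (by simp))
      omega
  · obtain ⟨rfl, rfl⟩ := e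
    have ha := hAm a (h₁.subset (by simp))
    have hc : c ∈ m :: B := h₂.subset (by simp)
    have hb : b ∈ m :: B := h₂.subset (by simp)
    simp only [List.mem_cons] at hb hc
    rcases hc with rfl | hc
    · rcases hb with rfl | hb
      · omega
      · have := hBm b hb; omega
    · have := hAB a (h₁.subset (by simp)) c hc; omega
  · obtain ⟨rfl, rfl, rfl⟩ := e
    have hb := hAm b (h₁.subset (by simp))
    have hc : c ∈ m :: B := h₂.subset (by simp)
    rcases List.mem_cons.1 hc with rfl | hc
    · omega
    · have := hAB a (h₁.subset (by simp)) c hc; omega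
  · obtain ⟨rfl, rfl, rfl, -⟩ := e
    exact hA a b c h₁ ⟨hac, hcb⟩
  · exact absurd e.2.2.2 (by simp)

lemma Avoids132.lt_of_mem_of_mem {a b : List ℕ} {m : ℕ} (h : Avoids132 (a ++ m :: b))
    (hnd : (a ++ b).Nodup) (hbm : ∀ y ∈ b, y < m) {x y : ℕ} (hx : x ∈ a) (hy : y ∈ b) :
    y < x := by
  have hne : x ≠ y := fun e => List.disjoint_of_nodup_append hnd hx (e ▸ hy)
  by_contra hxy
  refine h x m y ?_ ⟨by omega, hbm y hy⟩
  exact (List.singleton_sublist.2 hx).append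
    (List.cons_sublist_cons.2 (List.singleton_sublist.2 hy))

-- `b` is closed downwards inside the interval, so it is its initial segment of length `|b|`.
lemma mem_lowerInterval_of_separated {a b : List ℕ} {lo : ℕ} (hnd : (a ++ b).Nodup)
    (hab : ∀ x, x ∈ a ++ b ↔ lo ≤ x ∧ x < lo + a.length + b.length)
    (hsep : ∀ x ∈ a, ∀ y ∈ b, y < x) (y : ℕ) :
    y ∈ b ↔ lo ≤ y ∧ y < lo + b.length := by
  simp only [List.mem_append] at hab
  constructor
  · intro hy
    have hy' := (hab y).1 (.inr hy)
    have hsub : Icc lo y ⊆ b.toFinset := fun u hu => by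
      rw [mem_Icc] at hu
      rw [List.mem_toFinset]
      refine ((hab u).2 ⟨hu.1, by omega⟩).resolve_left fun hua => ?_
      have := hsep u hua y hy
      omega
    have := (card_le_card hsub).trans (List.toFinset_card_le b)
    rw [Nat.card_Icc] at this
    omega
  · rintro ⟨hlo, hy⟩
    refine ((hab y).2 ⟨hlo, by omega⟩).resolve_left fun hya => ?_
    have hsub : b.toFinset ⊆ Ico lo y := fun u hu => by
      rw [List.mem_toFinset] at hu
      exact mem_Ico.2 ⟨((hab u).1 (.inr hu)).1, hsep y hya u hu⟩
    have := card_le_card hsub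
    rw [Nat.card_Ico, List.toFinset_card_of_nodup hnd.of_append_right] at this
    omega

lemma mem_upperInterval_of_separated {a b : List ℕ} {lo : ℕ} (hnd : (a ++ b).Nodup)
    (hab : ∀ x, x ∈ a ++ b ↔ lo ≤ x ∧ x < lo + a.length + b.length)
    (hsep : ∀ x ∈ a, ∀ y ∈ b, y < x) (x : ℕ) :
    x ∈ a ↔ lo + b.length ≤ x ∧ x < lo + b.length + a.length := by
  have hb := mem_lowerInterval_of_separated hnd hab hsep x
  have hx := hab x
  rw [List.mem_append] at hx
  constructor
  · intro hxa
    have := hx.1 (.inl hxa)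
    have : ¬(lo ≤ x ∧ x < lo + b.length) := fun h =>
      List.disjoint_of_nodup_append hnd hxa (hb.2 h)
    omega
  · intro h
    refine (hx.2 ⟨by omega, by omega⟩).resolve_right fun hxb => ?_
    have := hb.1 hxb
    omega

namespace BinaryTree

-- The permutation of `lo, …, lo + numNodes - 1` with the root as maximum, the left subtree on the
-- larger values to its left and the right subtree on the smaller values to its right.
def toList132 : BinaryTree Unit → ℕ → List ℕ
  | nil, _ => []
  | node _ L R, lo =>
    L.toList132 (lo + R.numNodes) ++ (lo + L.numNodes + R.numNodes) :: R.toList132 lo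

-- The descent word of `T.toList132 lo` (see `descentWord_toList132`).
def shapeWord : BinaryTree Unit → List Bool
  | nil => []
  | node _ L R => L.shapeWord ++ (if L = nil then [] else [false]) ++
      ((if R = nil then [] else [true]) ++ R.shapeWord)

def mirror : BinaryTree Unit → BinaryTree Unit
  | nil => nil
  | node _ L R => node () R.mirror L.mirror

variable {T : BinaryTree Unit} {lo : ℕ}

@[simp] lemma length_toList132 :
    ∀ (T : BinaryTree Unit) (lo : ℕ), (T.toList132 lo).length = T.numNodes
  | nil, _ => rfl
  | node _ L R, lo => by
    simp [toList132, length_toList132 L, length_toList132 R]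
    omega

lemma toList132_eq_nil_iff : T.toList132 lo = [] ↔ T = nil := by
  rw [← List.length_eq_zero_iff, length_toList132]
  cases T <;> simp

lemma mem_toList132 : ∀ {T : BinaryTree Unit} {lo x : ℕ},
    x ∈ T.toList132 lo ↔ lo ≤ x ∧ x < lo + T.numNodes
  | nil, _, _ => by simp [toList132]
  | node _ L R, lo, x => by
    simp only [toList132, List.mem_append, List.mem_cons, mem_toList132, numNodes]
    omega

lemma nodup_toList132 : ∀ (T : BinaryTree Unit) (lo : ℕ), (T.toList132 lo).Nodup
  | nil, _ => List.nodup_nil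
  | node _ L R, lo => by
    rw [toList132, List.nodup_append, List.nodup_cons]
    refine ⟨nodup_toList132 L _, ⟨fun h => ?_, nodup_toList132 R _⟩, fun x hx y hy => ?_⟩
    · rw [mem_toList132] at h; omega
    · rw [mem_toList132] at hx
      rcases List.mem_cons.1 hy with rfl | hy
      · omega
      · rw [mem_toList132] at hy; omega

lemma avoids132_toList132 : ∀ (T : BinaryTree Unit) (lo : ℕ), Avoids132 (T.toList132 lo)
  | nil, _ => fun _ _ _ h => by simp [toList132] at h
  | node _ L R, lo => by
    refine avoids132_append_cons (avoids132_toList132 L _) (avoids132_toList132 R _) ?_ ?_ ?_ <;>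
      simp only [mem_toList132] <;> omega

lemma toList132_injective : ∀ {T T' : BinaryTree Unit} {lo : ℕ},
    T.toList132 lo = T'.toList132 lo → T = T'
  | nil, T', _, h => (toList132_eq_nil_iff.1 h.symm).symm
  | node _ L R, nil, _, h => absurd h (by simp [toList132])
  | node _ L R, node _ L' R', lo, h => by
    have hn : L.numNodes + R.numNodes = L'.numNodes + R'.numNodes := by
      simpa using congrArg List.length h
    rw [toList132, toList132, List.append_cons_inj_of_notMem] at h
    · obtain ⟨hL, -, hR⟩ := h
      have := toList132_injective hR
      subst this
      rw [toList132_injective hL]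
    · rw [mem_toList132]; omega
    · rw [mem_toList132]; omega

lemma exists_toList132_eq (n : ℕ) : ∀ (lo : ℕ) (l : List ℕ), l.length = n → l.Nodup →
    (∀ x, x ∈ l ↔ lo ≤ x ∧ x < lo + n) → Avoids132 l →
    ∃ T : BinaryTree Unit, T.toList132 lo = l := by
  induction n using Nat.strong_induction_on with
  | _ n ih =>
  intro lo l hlen hnd hmem hav
  rcases n with _ | n
  · exact ⟨nil, (List.length_eq_zero_iff.1 hlen).symm⟩
  obtain ⟨a, b, rfl⟩ := List.append_of_mem ((hmem (lo + n)).2 ⟨by omega, by omega⟩)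
  simp only [List.length_append, List.length_cons] at hlen
  rw [List.nodup_middle, List.nodup_cons] at hnd
  have hab : ∀ x, x ∈ a ++ b ↔ lo ≤ x ∧ x < lo + a.length + b.length := fun x => by
    have hx := List.perm_middle.mem_iff.symm.trans (hmem x)
    rw [List.mem_cons] at hx
    constructor
    · intro h
      have := hx.1 (.inr h)
      have : x ≠ lo + n := fun e => hnd.1 (e ▸ h)
      omega
    · intro h
      exact (hx.2 ⟨h.1, by omega⟩).resolve_left (by omega)
  have hsep : ∀ x ∈ a, ∀ y ∈ b, y < x := fun x hx y hy =>
    hav.lt_of_mem_of_mem hnd.2 (fun y hy => by have := (hab y).1 (by simp [hy]); omega) hx hy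
  obtain ⟨L, hL⟩ := ih a.length (by omega) _ a rfl hnd.2.of_append_left
    (mem_upperInterval_of_separated hnd.2 hab hsep) (hav.sublist (by simp))
  obtain ⟨R, hR⟩ := ih b.length (by omega) lo b rfl hnd.2.of_append_right
    (mem_lowerInterval_of_separated hnd.2 hab hsep)
    (hav.sublist ((List.sublist_cons_self _ _).trans (List.sublist_append_right _ _)))
  refine ⟨node () L R, ?_⟩
  have hLn : L.numNodes = a.length := by rw [← length_toList132 L, hL]
  have hRn : R.numNodes = b.length := by rw [← length_toList132 R, hR]
  rw [toList132, hRn, hL, hR, hLn]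
  congr 2
  omega

lemma descentWord_toList132 : ∀ (T : BinaryTree Unit) (lo : ℕ),
    descentWord (T.toList132 lo) = T.shapeWord
  | nil, _ => rfl
  | node _ L R, lo => by
    rw [toList132, descentWord_append_cons, descentWord_append_singleton_of_lt,
      descentWord_cons_of_lt, descentWord_toList132 L, descentWord_toList132 R, shapeWord]
    · simp only [toList132_eq_nil_iff, List.append_assoc]
    all_goals intro x hx; rw [mem_toList132] at hx; omega

@[simp] lemma numNodes_mirror : ∀ T : BinaryTree Unit, T.mirror.numNodes = T.numNodes
  | nil => rfl
  | node _ L R => by simp [mirror, numNodes_mirror L, numNodes_mirror R]; omega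

lemma mirror_involutive : Function.Involutive mirror
  | nil => rfl
  | node _ L R => by simp [mirror, mirror_involutive L, mirror_involutive R]

@[simp] lemma mirror_eq_nil_iff : T.mirror = nil ↔ T = nil := by
  cases T <;> simp [mirror]

lemma shapeWord_mirror : ∀ T : BinaryTree Unit, T.mirror.shapeWord = revCompl T.shapeWord
  | nil => rfl
  | node _ L R => by
    simp only [mirror, shapeWord, shapeWord_mirror L, shapeWord_mirror R, mirror_eq_nil_iff,
      revCompl_append, List.append_assoc]
    split_ifs <;> rfl

lemma length_shapeWord (T : BinaryTree Unit) : T.shapeWord.length = T.numNodes - 1 := by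
  rw [← descentWord_toList132 T 0, length_descentWord, length_toList132]

lemma card_shapeWord_revCompl (n : ℕ) (P : List Bool → Prop) :
    Nat.card {T : BinaryTree Unit // T.numNodes = n ∧ P T.shapeWord} =
      Nat.card {T : BinaryTree Unit // T.numNodes = n ∧ P (revCompl T.shapeWord)} :=
  Nat.card_congr <| (mirror_involutive.toPerm mirror).subtypeEquiv fun T => by
    rw [Function.Involutive.coe_toPerm, shapeWord_mirror, revCompl_revCompl, numNodes_mirror]

end BinaryTree

lemma List.sublist_ofFn_iff {α : Type*} {n : ℕ} {g : Fin n → α} {l : List α} :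
    l.Sublist (List.ofFn g) ↔
      ∃ f : Fin l.length → Fin n, StrictMono f ∧ ∀ i, l.get i = g (f i) := by
  rw [List.sublist_iff_exists_fin_orderEmbedding_get_eq]
  constructor
  · rintro ⟨f, hf⟩
    refine ⟨Fin.cast (List.length_ofFn) ∘ f, fun i j hij => f.strictMono hij, fun i => ?_⟩
    rw [hf i, List.get_ofFn]
    rfl
  · rintro ⟨f, hf, hget⟩
    refine ⟨OrderEmbedding.ofStrictMono (Fin.cast List.length_ofFn.symm ∘ f)
      fun _ _ hij => hf hij, fun i => ?_⟩
    rw [hget i, List.get_ofFn]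
    rfl

lemma swap_one_two_pattern_iff (g : Fin 3 → ℕ) :
    (∀ a b, g a < g b ↔ Equiv.swap (1 : Fin 3) 2 a < Equiv.swap (1 : Fin 3) 2 b) ↔
      g 0 < g 2 ∧ g 2 < g 1 := by
  refine ⟨fun h => ⟨(h 0 2).2 (by decide), (h 2 1).2 (by decide)⟩,
    fun ⟨h02, h21⟩ a b => ?_⟩
  fin_cases a <;> fin_cases b <;> simp [Equiv.swap_apply_of_ne_of_ne] <;> omega

lemma strictMono_window_iff {α : Type*} [Preorder α] {f : ℕ → α} {i k : ℕ} :
    StrictMono (fun a : Fin k => f (i + a)) ↔ ∀ t, t + 1 < k → f (i + t) < f (i + t + 1) := by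
  rcases k with _ | k
  · simp [Subsingleton.strictMono]
  · rw [Fin.strictMono_iff_lt_succ, Fin.forall_iff]
    simp [Nat.add_assoc]

lemma strictAnti_window_iff {α : Type*} [Preorder α] {f : ℕ → α} {i k : ℕ} :
    StrictAnti (fun a : Fin k => f (i + a)) ↔ ∀ t, t + 1 < k → f (i + t + 1) < f (i + t) := by
  rcases k with _ | k
  · simp [Subsingleton.strictAnti]
  · rw [Fin.strictAnti_iff_succ_lt, Fin.forall_iff]
    simp [Nat.add_assoc]

def permToList {n : ℕ} (σ : Equiv.Perm (Fin n)) : List ℕ := List.ofFn fun i => (σ i : ℕ)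

section Perm

variable {n : ℕ}

lemma permToList_injective : Function.Injective (permToList (n := n)) := fun _ _ h =>
  Equiv.ext fun i => Fin.ext (congrFun (List.ofFn_injective h) i)

lemma exists_permToList_eq {l : List ℕ} (hlen : l.length = n) (hnd : l.Nodup)
    (hlt : ∀ x ∈ l, x < n) : ∃ σ : Equiv.Perm (Fin n), permToList σ = l := by
  subst hlen
  let f : Fin l.length → Fin l.length := fun i => ⟨l[i], hlt _ (List.getElem_mem _)⟩
  have hf : Function.Injective f := fun i j h =>
    Fin.ext (hnd.getElem_inj_iff.1 (congrArg Fin.val h))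
  exact ⟨Equiv.ofBijective f (Finite.injective_iff_bijective.1 hf), List.ofFn_getElem⟩

variable (σ : Equiv.Perm (Fin n))

@[simp] lemma length_permToList : (permToList σ).length = n := List.length_ofFn

lemma nodup_permToList : (permToList σ).Nodup :=
  List.nodup_ofFn.2 fun _ _ h => σ.injective (Fin.val_injective h)

lemma mem_permToList {x : ℕ} : x ∈ permToList σ ↔ x < n := by
  simp only [permToList, List.mem_ofFn]
  exact ⟨fun ⟨i, hi⟩ => hi ▸ (σ i).isLt, fun hx => ⟨σ.symm ⟨x, hx⟩, by simp⟩⟩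

lemma permVal_eq_getD (j : ℕ) : permVal σ j = (permToList σ).getD j 0 := by
  unfold permVal
  split_ifs with h
  · rw [List.getD_eq_getElem _ _ (by simpa using h)]
    simp [permToList]
  · rw [List.getD_eq_default _ _ (by simpa using h)]

lemma avoids_iff_avoids132 :
    avoids (Equiv.swap (1 : Fin 3) 2) σ ↔ Avoids132 (permToList σ) := by
  have key (f : Fin 3 → Fin n) : (∀ a b, σ (f a) < σ (f b) ↔
      Equiv.swap (1 : Fin 3) 2 a < Equiv.swap (1 : Fin 3) 2 b) ↔
      ((σ (f 0) : ℕ) < σ (f 2) ∧ (σ (f 2) : ℕ) < σ (f 1)) :=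
    swap_one_two_pattern_iff fun a => (σ (f a) : ℕ)
  simp only [avoids, key, not_exists]
  constructor
  · intro h a b c hsub hpat
    obtain ⟨f, hf, hget⟩ := List.sublist_ofFn_iff.1 hsub
    have ha : a = σ (f 0) := hget 0
    have hb : b = σ (f 1) := hget 1
    have hc : c = σ (f 2) := hget 2
    rw [ha, hb, hc] at hpat
    exact h f ⟨hf, hpat⟩
  · intro h f ⟨hf, hpat⟩
    exact h (σ (f 0)) (σ (f 1)) (σ (f 2))
      (List.sublist_ofFn_iff.2 ⟨f, hf, fun i => by fin_cases i <;> rfl⟩) hpat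

lemma getD_descentWord_permToList_eq_true {p : ℕ} (hp : p + 1 < n) :
    (descentWord (permToList σ)).getD p false = true ↔ permVal σ (p + 1) < permVal σ p := by
  rw [getD_descentWord (by simpa), permVal_eq_getD, permVal_eq_getD, decide_eq_true_iff]

lemma getD_descentWord_permToList_eq_false {p : ℕ} (hp : p + 1 < n) :
    (descentWord (permToList σ)).getD p false = false ↔ permVal σ p < permVal σ (p + 1) := by
  have hne : permVal σ p ≠ permVal σ (p + 1) := by
    simp only [permVal, dif_pos hp, dif_pos (show p < n by omega), ne_eq, Fin.val_inj,
      EmbeddingLike.apply_eq_iff_eq, Fin.mk.injEq]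
    omega
  rw [← Bool.not_eq_true, getD_descentWord_permToList_eq_true σ hp]
  omega

lemma desc_eq_count_true : desc σ = (descentWord (permToList σ)).count true := by
  rw [count_true_eq_card_filter, length_descentWord, length_permToList, desc]
  congr 1
  refine filter_congr fun i hi => ?_
  rw [getD_descentWord_permToList_eq_true σ (by rw [mem_range] at hi; omega)]

lemma cmch_one_eq_runCount (hn : 1 ≤ n) (k : ℕ) :
    cmch (1 : Equiv.Perm (Fin k)) σ = runCount false k (descentWord (permToList σ)) := by
  rw [cmch, runCount, length_descentWord, length_permToList,
    show n - 1 + 2 - k = n + 1 - k by omega]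
  congr 1
  refine filter_congr fun i hi => ?_
  rw [mem_range] at hi
  have hmono : (∀ a b : Fin k, permVal σ (i + a) < permVal σ (i + b) ↔
      (1 : Equiv.Perm (Fin k)) a < (1 : Equiv.Perm (Fin k)) b) ↔
      StrictMono fun a : Fin k => permVal σ (i + a) :=
    ⟨fun h a b hab => (h a b).2 hab, fun h a b => h.lt_iff_lt⟩
  rw [hmono, strictMono_window_iff]
  simp only [Nat.lt_sub_iff_add_lt]
  exact forall₂_congr fun t ht => (getD_descentWord_permToList_eq_false σ (by omega)).symm

lemma cmch_revPerm_eq_runCount (hn : 1 ≤ n) (k : ℕ) :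
    cmch (Fin.revPerm : Equiv.Perm (Fin k)) σ = runCount true k (descentWord (permToList σ)) := by
  rw [cmch, runCount, length_descentWord, length_permToList,
    show n - 1 + 2 - k = n + 1 - k by omega]
  congr 1
  refine filter_congr fun i hi => ?_
  rw [mem_range] at hi
  have hanti : (∀ a b : Fin k, permVal σ (i + a) < permVal σ (i + b) ↔
      Fin.revPerm a < Fin.revPerm b) ↔ StrictAnti fun a : Fin k => permVal σ (i + a) := by
    simp only [Fin.revPerm_apply, Fin.rev_lt_rev]
    exact ⟨fun h a b hab => (h b a).2 hab, fun h a b => h.lt_iff_gt⟩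
  rw [hanti, strictAnti_window_iff]
  simp only [Nat.lt_sub_iff_add_lt]
  exact forall₂_congr fun t ht => (getD_descentWord_permToList_eq_true σ (by omega)).symm

end Perm

open BinaryTree in
lemma card_avoids_eq_card_shapeWord (n : ℕ) (P : List Bool → Prop) :
    Nat.card {σ : Equiv.Perm (Fin n) //
        avoids (Equiv.swap (1 : Fin 3) 2) σ ∧ P (descentWord (permToList σ))} =
      Nat.card {T : BinaryTree Unit // T.numNodes = n ∧ P T.shapeWord} := by
  have htree (σ : Equiv.Perm (Fin n)) (hσ : avoids (Equiv.swap (1 : Fin 3) 2) σ) :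
      ∃ T : BinaryTree Unit, T.toList132 0 = permToList σ :=
    exists_toList132_eq n 0 _ (length_permToList σ) (nodup_permToList σ)
      (fun x => by simp [mem_permToList]) ((avoids_iff_avoids132 σ).1 hσ)
  refine Nat.card_congr
    (Equiv.ofBijective (fun σ => ⟨(htree σ σ.2.1).choose, ?_⟩) ⟨?_, ?_⟩)
  · have h := (htree σ σ.2.1).choose_spec
    rw [← length_toList132 _ 0, h, ← descentWord_toList132 _ 0, h]
    exact ⟨length_permToList _, σ.2.2⟩
  · intro σ τ h
    refine Subtype.ext (permToList_injective ?_)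
    rw [← (htree σ σ.2.1).choose_spec, ← (htree τ τ.2.1).choose_spec]
    exact congrArg (fun T => T.1.toList132 0) h
  · rintro ⟨T, hT, hP⟩
    obtain ⟨σ, hσ⟩ := exists_permToList_eq (n := n) (by simp [hT]) (nodup_toList132 T 0)
      (fun x hx => by rw [mem_toList132] at hx; omega)
    have havoids : avoids (Equiv.swap (1 : Fin 3) 2) σ := by
      rw [avoids_iff_avoids132, hσ]; exact avoids132_toList132 T 0
    refine ⟨⟨σ, havoids, by rwa [hσ, descentWord_toList132]⟩, Subtype.ext ?_⟩
    exact toList132_injective ((htree σ havoids).choose_spec.trans hσ)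

theorem stmt_2_general (k n : ℕ) (hn : 1 ≤ n) (d j : ℕ) (hd : d ≤ n - 1) :
    Nat.card {σ : Equiv.Perm (Fin n) //
        avoids (Equiv.swap (1 : Fin 3) 2) σ ∧ desc σ = d ∧
        cmch (1 : Equiv.Perm (Fin k)) σ = j} =
    Nat.card {σ : Equiv.Perm (Fin n) //
        avoids (Equiv.swap (1 : Fin 3) 2) σ ∧ desc σ = n - 1 - d ∧
        cmch (Fin.revPerm : Equiv.Perm (Fin k)) σ = j} := by
  simp only [desc_eq_count_true, cmch_one_eq_runCount _ hn, cmch_revPerm_eq_runCount _ hn]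
  rw [card_avoids_eq_card_shapeWord n (fun w => w.count true = d ∧ runCount false k w = j),
    card_avoids_eq_card_shapeWord n (fun w => w.count true = n - 1 - d ∧ runCount true k w = j),
    BinaryTree.card_shapeWord_revCompl n (fun w => w.count true = d ∧ runCount false k w = j)]
  refine Nat.card_congr (Equiv.subtypeEquivRight fun T => ?_)
  rw [count_true_revCompl, runCount_revCompl, Bool.not_false, BinaryTree.length_shapeWord]
  have := T.shapeWord.count_le_length (a := true)
  rw [BinaryTree.length_shapeWord] at this
  constructor <;> rintro ⟨rfl, h₁, h₂⟩ <;> refine ⟨rfl, ?_, h₂⟩ <;> omega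

/-- in `S_n(132)` the joint distribution of `(des, 12⋯k-mch)` at `(d, j)`
matches that of `(des, k⋯21-mch)` at `(n-1-d, j)`. -/
theorem stmt_2 (k n : ℕ) (hk : 2 ≤ k) (hn : 1 ≤ n) (d j : ℕ) (hd : d ≤ n - 1) :
    Nat.card {σ : Equiv.Perm (Fin n) //
        avoids (Equiv.swap (1 : Fin 3) 2) σ ∧ desc σ = d ∧
        cmch (1 : Equiv.Perm (Fin k)) σ = j} =
    Nat.card {σ : Equiv.Perm (Fin n) //
        avoids (Equiv.swap (1 : Fin 3) 2) σ ∧ desc σ = n - 1 - d ∧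
        cmch (Fin.revPerm : Equiv.Perm (Fin k)) σ = j} :=
  stmt_2_general k n hn d j hd
end

section
/- For every n ≥ 1, the number of permutations σ ∈ S_n(132) with 231-mch(σ) = 0 (i.e. σ classically avoids 132 and has no consecutive 231-match) equals 2^{n−1}. -/
open Finset

/-! A permutation avoids `132` and has no consecutive `231` exactly when it has no peak
`i < j < k` with `σ j` above both `σ i` and `σ k`: a peak can be shrunk to an adjacent one,
and an adjacent peak is either a `132` occurrence or a consecutive `231`.
A peak-free permutation decreases down to the value `0` and increases afterwards, so it is
determined by the set `S` of values to the left of `0`: it lists `S` decreasingly and then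
the remaining values increasingly, i.e. it sorts the values by the key `-v` on `S` and `v`
off `S`. Conversely every set `S ∌ 0` arises this way, and there are `2 ^ (n - 1)` of them. -/

open Equiv Function

def PeakFree {n : ℕ} (σ : Perm (Fin n)) : Prop :=
  ∀ i j k : Fin n, i < j → j < k → σ j < σ i ∨ σ j < σ k

theorem exists_adjacent_peak {α : Type*} [LinearOrder α] {f : ℕ → α} {n : ℕ}
    (hf : Set.InjOn f (Set.Iio n)) {i j k : ℕ} (hij : i < j) (hjk : j < k) (hk : k < n)
    (hi : f i < f j) (hk' : f k < f j) :
    ∃ p, p + 2 < n ∧ f p < f (p + 1) ∧ f (p + 2) < f (p + 1) := by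
  induction h : k - i using Nat.strong_induction_on generalizing i j k with
  | _ s ih =>
  subst h
  have hne : ∀ a b, a < n → b < n → a ≠ b → f a ≠ f b :=
    fun a b ha hb hab h => hab (hf ha hb h)
  by_cases hj : i + 1 < j
  · rcases (hne (i + 1) j (by omega) (by omega) (by omega)).lt_or_gt with h | h
    · exact ih _ (by omega) (by omega) hjk hk h hk' rfl
    · exact ih _ (by omega) (Nat.lt_succ_self i) hj (by omega) (hi.trans h) h rfl
  by_cases hk2 : j + 1 < k
  · rcases (hne (j + 1) j (by omega) (by omega) (by omega)).lt_or_gt with h | h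
    · exact ih _ (by omega) hij (Nat.lt_succ_self j) (by omega) hi h rfl
    · exact ih _ (by omega) (Nat.lt_succ_self j) hk2 hk h (hk'.trans h) rfl
  obtain rfl : j = i + 1 := by omega
  obtain rfl : k = i + 2 := by omega
  exact ⟨i, hk, hi, hk'⟩

section permVal

variable {n : ℕ} (σ : Perm (Fin n))

theorem permVal_of_lt {j : ℕ} (hj : j < n) : permVal σ j = σ ⟨j, hj⟩ := by
  simp [permVal, hj]

@[simp]
theorem permVal_coe (i : Fin n) : permVal σ i = σ i := permVal_of_lt σ i.2

theorem permVal_injOn : Set.InjOn (permVal σ) (Set.Iio n) := by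
  intro a ha b hb h
  rw [permVal_of_lt σ ha, permVal_of_lt σ hb] at h
  exact Fin.mk.inj (σ.injective (Fin.ext h))

end permVal

section PeakFree

variable {n : ℕ} {σ : Perm (Fin n)}

theorem PeakFree.avoids_132 (h : PeakFree σ) : avoids (swap (1 : Fin 3) 2) σ := by
  rintro ⟨f, hf, hiff⟩
  have h01 : σ (f 0) < σ (f 1) := (hiff 0 1).2 (by decide)
  have h21 : σ (f 2) < σ (f 1) := (hiff 2 1).2 (by decide)
  rcases h (f 0) (f 1) (f 2) (hf (by decide)) (hf (by decide)) with h' | h'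
  exacts [h'.not_gt h01, h'.not_gt h21]

theorem PeakFree.cmch_231_eq_zero (h : PeakFree σ) : cmch (finRotate 3) σ = 0 := by
  rw [cmch, card_eq_zero, filter_eq_empty_iff]
  intro i hi hmatch
  have hin : i + 2 < n := by have := mem_range.1 hi; omega
  have hup := (hmatch 0 1).2 (by decide)
  have hdown := (hmatch 2 1).2 (by decide)
  simp only [Fin.val_zero, Fin.val_one, Fin.val_two, add_zero, permVal_of_lt σ hin,
    permVal_of_lt σ (by omega : i < n), permVal_of_lt σ (by omega : i + 1 < n)] at hup hdown
  rcases h ⟨i, by omega⟩ ⟨i + 1, by omega⟩ ⟨i + 2, hin⟩ (by simp [Fin.lt_def])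
    (by simp [Fin.lt_def]) with h' | h'
  exacts [h'.not_gt hup, h'.not_gt hdown]

theorem peakFree_of_avoids_132_of_cmch_231 (h132 : avoids (swap (1 : Fin 3) 2) σ)
    (h231 : cmch (finRotate 3) σ = 0) : PeakFree σ := by
  by_contra hpeak
  simp only [PeakFree, not_forall, not_or, not_lt] at hpeak
  obtain ⟨i, j, k, hij, hjk, hji, hjk'⟩ := hpeak
  have hi : permVal σ i < permVal σ j := by
    simpa using lt_of_le_of_ne hji (σ.injective.ne hij.ne)
  have hk : permVal σ k < permVal σ j := by
    simpa using lt_of_le_of_ne hjk' (σ.injective.ne hjk.ne')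
  obtain ⟨p, hp, hup, hdown⟩ := exists_adjacent_peak (permVal_injOn σ) hij hjk k.2 hi hk
  rcases (permVal_injOn σ).ne (Set.mem_Iio.2 (by omega)) (Set.mem_Iio.2 hp)
    (by omega : p ≠ p + 2) |>.lt_or_gt with h | h
  · refine h132 ⟨fun a => ⟨p + a, by omega⟩, fun a b hab => by simpa using hab, fun a b => ?_⟩
    simp only [permVal_of_lt σ (by omega : p < n), permVal_of_lt σ (by omega : p + 1 < n),
      permVal_of_lt σ hp] at hup hdown h
    fin_cases a <;> fin_cases b <;> simp [swap_apply_def, Fin.lt_def, -Fin.val_fin_lt] <;> omega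
  · refine absurd h231 (card_ne_zero.2 ⟨p, mem_filter.2 ⟨mem_range.2 (by omega), fun a b => ?_⟩⟩)
    fin_cases a <;> fin_cases b <;> simp <;> omega

theorem peakFree_iff (σ : Perm (Fin n)) :
    avoids (swap (1 : Fin 3) 2) σ ∧ cmch (finRotate 3) σ = 0 ↔ PeakFree σ :=
  ⟨fun h => peakFree_of_avoids_132_of_cmch_231 h.1 h.2,
    fun h => ⟨h.avoids_132, h.cmch_231_eq_zero⟩⟩

end PeakFree

theorem Tuple.eq_sort_of_strictMono_comp {α : Type*} [LinearOrder α] {n : ℕ} {f : Fin n → α}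
    {σ : Perm (Fin n)} (h : StrictMono (f ∘ σ)) : σ = Tuple.sort f :=
  Tuple.eq_sort_iff.2 ⟨h.monotone, fun _ _ hij hf => absurd hf (h hij).ne⟩

theorem Tuple.strictMono_comp_sort {α : Type*} [LinearOrder α] {n : ℕ} {f : Fin n → α}
    (hf : Injective f) : StrictMono (f ∘ Tuple.sort f) :=
  (Tuple.monotone_sort f).strictMono_of_injective (hf.comp (Tuple.sort f).injective)

section VShape

variable {m : ℕ}

def leftOfZero (σ : Perm (Fin (m + 1))) : Finset (Fin (m + 1)) :=
  {v | σ.symm v < σ.symm 0}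

def valleyKey (S : Finset (Fin (m + 1))) (v : Fin (m + 1)) : ℤ :=
  if v ∈ S then -(v : ℤ) else v

theorem valleyKey_neg_iff {S : Finset (Fin (m + 1))} (h0 : 0 ∉ S) {v : Fin (m + 1)} :
    valleyKey S v < 0 ↔ v ∈ S := by
  unfold valleyKey
  split_ifs with hv
  · simpa [hv, Fin.val_pos_iff] using Fin.pos_iff_ne_zero.2 (ne_of_mem_of_not_mem hv h0)
  · simp [hv]

theorem valleyKey_injective {S : Finset (Fin (m + 1))} (h0 : 0 ∉ S) :
    Injective (valleyKey S) := by
  intro u v huv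
  have hS : u ∈ S ↔ v ∈ S := by rw [← valleyKey_neg_iff h0, ← valleyKey_neg_iff h0, huv]
  unfold valleyKey at huv
  ext
  split_ifs at huv <;> simp_all

theorem PeakFree.strictMono_valleyKey_leftOfZero {σ : Perm (Fin (m + 1))} (h : PeakFree σ) :
    StrictMono (valleyKey (leftOfZero σ) ∘ σ) := by
  set t := σ.symm 0
  have hσt : σ t = 0 := σ.apply_symm_apply 0
  have hmem : ∀ i, σ i ∈ leftOfZero σ ↔ i < t := by simp [leftOfZero, t]
  have hpos : ∀ i, i ≠ t → 0 < (σ i : ℤ) := fun i hi => by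
    have : σ i ≠ 0 := fun h0 => hi (σ.injective (h0.trans hσt.symm))
    exact_mod_cast Fin.pos_iff_ne_zero.2 this
  intro i j hij
  simp only [comp, valleyKey, hmem]
  split_ifs with hi hj hj
  · have := Fin.lt_def.1 ((h i j t hij hj).resolve_right (by simp [hσt]))
    omega
  · have := hpos i hi.ne
    omega
  · exact absurd (hij.trans hj) hi
  · rcases (not_lt.1 hi).lt_or_eq with hti | rfl
    · have := Fin.lt_def.1 ((h t i j hti hij).resolve_left (by simp [hσt]))
      omega
    · simpa [hσt] using hpos j hij.ne'

theorem peakFree_of_strictMono_valleyKey {S : Finset (Fin (m + 1))} {σ : Perm (Fin (m + 1))}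
    (h : StrictMono (valleyKey S ∘ σ)) : PeakFree σ := by
  intro i j k hij hjk
  have h1 := h hij
  have h2 := h hjk
  simp only [comp, valleyKey] at h1 h2
  split_ifs at h1 h2 <;> simp only [Fin.lt_def] <;> omega

theorem leftOfZero_eq_of_strictMono_valleyKey {S : Finset (Fin (m + 1))}
    {σ : Perm (Fin (m + 1))} (h0 : 0 ∉ S) (h : StrictMono (valleyKey S ∘ σ)) :
    leftOfZero σ = S := by
  ext v
  have hkey0 : valleyKey S 0 = 0 := by simp [valleyKey, h0]
  rw [← valleyKey_neg_iff h0, ← hkey0, leftOfZero, mem_filter, ← h.lt_iff_lt]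
  simp

def peakFreeEquiv :
    {σ : Perm (Fin (m + 1)) // PeakFree σ} ≃ {S : Finset (Fin (m + 1)) // 0 ∉ S} where
  toFun σ := ⟨leftOfZero σ.1, by simp [leftOfZero]⟩
  invFun S := ⟨Tuple.sort (valleyKey S.1),
    peakFree_of_strictMono_valleyKey (Tuple.strictMono_comp_sort (valleyKey_injective S.2))⟩
  left_inv σ := Subtype.ext
    (Tuple.eq_sort_of_strictMono_comp σ.2.strictMono_valleyKey_leftOfZero).symm
  right_inv S := Subtype.ext (leftOfZero_eq_of_strictMono_valleyKey S.2
    (Tuple.strictMono_comp_sort (valleyKey_injective S.2)))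

end VShape

theorem Fintype.card_finset_notMem {α : Type*} [Fintype α] [DecidableEq α] (a : α) :
    Fintype.card {S : Finset α // a ∉ S} = 2 ^ (Fintype.card α - 1) := by
  rw [Fintype.card_subtype]
  have : ({S | a ∉ S} : Finset (Finset α)) = (univ.erase a).powerset := by
    ext S
    simp [subset_erase]
  rw [this, card_powerset, card_erase_of_mem (mem_univ a), card_univ]

/-- the number of `132`-avoiding permutations of length `n ≥ 1` with no
consecutive `231`-match is `2^(n-1)`. -/
theorem stmt_7 (n : ℕ) (hn : 1 ≤ n) :
    Nat.card {σ : Equiv.Perm (Fin n) //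
        avoids (Equiv.swap (1 : Fin 3) 2) σ ∧ cmch (finRotate 3) σ = 0} =
      2 ^ (n - 1) := by
  obtain ⟨m, rfl⟩ : ∃ m, n = m + 1 := ⟨n - 1, by omega⟩
  rw [Nat.card_congr ((Equiv.subtypeEquivRight peakFree_iff).trans peakFreeEquiv),
    Nat.card_eq_fintype_card, Fintype.card_finset_notMem, Fintype.card_fin]
end
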